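/- arXiv:math/0010177 — 5 statements merged into one kernel-verified Lean document; each statement's English description precedes it below -/
import Mathlib

section
/- Let u₃¹ = x¹ + y¹ + (1/2)(x¹)²y², u₃² = x² + y² − (1/2)x¹(y²)², u₄¹ = −x¹ + y¹ + (1/2)(x¹)²y², u₄² = x² − y² − (1/2)x¹(y²)² be smooth functions of (x¹,x²,y¹,y²) ∈ ℝ⁴. Then the abelian 2-equation 2 dx¹∧dx² + 2 dy¹∧dy² − du₃¹∧du₃² + du₄¹∧du₄² = 0 holds identically on ℝ⁴: at every point and for all vectors v = (v₁,v₂,v₃,v₄) and w = (w₁,w₂,w₃,w₄) in ℝ⁴, one has 2(v₁w₂ − v₂w₁) + 2(v₃w₄ − v₄w₃) − (Du₃¹(v)·Du₃²(w) − Du₃¹(w)·Du₃²(v)) + (Du₄¹(v)·Du₄²(w) − Du₄¹(w)·Du₄²(v)) = 0, where D denotes the Fréchet differential at that point. -/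
noncomputable section

/- Coordinates on ℝ⁴ = (Fin 4 → ℝ) are indexed as
   0 ↦ x¹, 1 ↦ x², 2 ↦ y¹, 3 ↦ y². -/

/-- `u₃¹ = x¹ + y¹ + (1/2)(x¹)²y²`. -/
def u31 : (Fin 4 → ℝ) → ℝ := fun p => p 0 + p 2 + (1/2) * (p 0)^2 * p 3

/-- `u₃² = x² + y² − (1/2)x¹(y²)²`. -/
def u32 : (Fin 4 → ℝ) → ℝ := fun p => p 1 + p 3 - (1/2) * p 0 * (p 3)^2

/-- `u₄¹ = −x¹ + y¹ + (1/2)(x¹)²y²`. -/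
def u41 : (Fin 4 → ℝ) → ℝ := fun p => -p 0 + p 2 + (1/2) * (p 0)^2 * p 3

/-- `u₄² = x² − y² − (1/2)x¹(y²)²`. -/
def u42 : (Fin 4 → ℝ) → ℝ := fun p => p 1 - p 3 - (1/2) * p 0 * (p 3)^2

open ContinuousLinearMap

private lemma hproj (i : Fin 4) (pt : Fin 4 → ℝ) :
    HasFDerivAt (fun p : Fin 4 → ℝ => p i) (proj i : (Fin 4 → ℝ) →L[ℝ] ℝ) pt :=
  (proj i : (Fin 4 → ℝ) →L[ℝ] ℝ).hasFDerivAt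

lemma fderiv_u31 (pt v : Fin 4 → ℝ) :
    fderiv ℝ u31 pt v = v 0 + v 2 + (pt 0 * pt 3) * v 0 + ((1/2) * (pt 0)^2) * v 3 := by
  have heq : u31 = fun p => p 0 + p 2 + (1/2) * (p 0 * p 0) * p 3 := by
    funext p; simp only [u31]; ring
  have h : HasFDerivAt (fun p : Fin 4 → ℝ => p 0 + p 2 + (1/2) * (p 0 * p 0) * p 3) _ pt :=
    ((hproj 0 pt).add (hproj 2 pt)).add
      ((((hproj 0 pt).mul (hproj 0 pt)).const_mul (1/2:ℝ)).mul (hproj 3 pt))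
  rw [heq, h.fderiv]; simp; ring

lemma fderiv_u41 (pt v : Fin 4 → ℝ) :
    fderiv ℝ u41 pt v = -v 0 + v 2 + (pt 0 * pt 3) * v 0 + ((1/2) * (pt 0)^2) * v 3 := by
  have heq : u41 = fun p => -p 0 + p 2 + (1/2) * (p 0 * p 0) * p 3 := by
    funext p; simp only [u41]; ring
  have h : HasFDerivAt (fun p : Fin 4 → ℝ => -p 0 + p 2 + (1/2) * (p 0 * p 0) * p 3) _ pt :=
    ((hproj 0 pt).neg.add (hproj 2 pt)).add
      ((((hproj 0 pt).mul (hproj 0 pt)).const_mul (1/2:ℝ)).mul (hproj 3 pt))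
  rw [heq, h.fderiv]; simp; ring

lemma fderiv_u32 (pt v : Fin 4 → ℝ) :
    fderiv ℝ u32 pt v = v 1 + v 3 - ((1/2) * (pt 3)^2) * v 0 - (pt 0 * pt 3) * v 3 := by
  have heq : u32 = fun p => p 1 + p 3 - (1/2) * p 0 * (p 3 * p 3) := by
    funext p; simp only [u32]; ring
  have h : HasFDerivAt (fun p : Fin 4 → ℝ => p 1 + p 3 - (1/2) * p 0 * (p 3 * p 3)) _ pt :=
    ((hproj 1 pt).add (hproj 3 pt)).sub
      (((hproj 0 pt).const_mul (1/2:ℝ)).mul ((hproj 3 pt).mul (hproj 3 pt)))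
  rw [heq, h.fderiv]; simp; ring

lemma fderiv_u42 (pt v : Fin 4 → ℝ) :
    fderiv ℝ u42 pt v = v 1 - v 3 - ((1/2) * (pt 3)^2) * v 0 - (pt 0 * pt 3) * v 3 := by
  have heq : u42 = fun p => p 1 - p 3 - (1/2) * p 0 * (p 3 * p 3) := by
    funext p; simp only [u42]; ring
  have h : HasFDerivAt (fun p : Fin 4 → ℝ => p 1 - p 3 - (1/2) * p 0 * (p 3 * p 3)) _ pt :=
    ((hproj 1 pt).sub (hproj 3 pt)).sub
      (((hproj 0 pt).const_mul (1/2:ℝ)).mul ((hproj 3 pt).mul (hproj 3 pt)))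
  rw [heq, h.fderiv]; simp; ring

/-- The abelian 2-equation
`2 dx¹∧dx² + 2 dy¹∧dy² − du₃¹∧du₃² + du₄¹∧du₄² = 0` holds identically on ℝ⁴:
at every point `pt` and for all vectors `v, w`, evaluating each wedge of
differentials on the pair `(v, w)` gives zero. -/
theorem abelian_two_equation (pt v w : Fin 4 → ℝ) :
    2 * (v 0 * w 1 - w 0 * v 1) + 2 * (v 2 * w 3 - w 2 * v 3)
      - (fderiv ℝ u31 pt v * fderiv ℝ u32 pt w - fderiv ℝ u31 pt w * fderiv ℝ u32 pt v)
      + (fderiv ℝ u41 pt v * fderiv ℝ u42 pt w - fderiv ℝ u41 pt w * fderiv ℝ u42 pt v)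
      = 0 := by
  rw [fderiv_u31 pt v, fderiv_u31 pt w, fderiv_u32 pt v, fderiv_u32 pt w,
    fderiv_u41 pt v, fderiv_u41 pt w, fderiv_u42 pt v, fderiv_u42 pt w]
  ring

end
end

section
/- Let b^i_{jkl} (i,j,k,l ∈ {1,2}) be a family of real numbers and let b_{kl} be a symmetric family of real numbers such that for all i,j,k,l: (1/6)∑_σ b^i_{σ(j)σ(k)σ(l)} = (1/6)∑_σ δ^i_{σ(j)} b_{σ(k)σ(l)} (sums over all six orderings σ of (j,k,l)). If in addition b^2_{jkl} = 0 for all j,k,l, then b_{kl} = 0 for all k,l, and hence the full symmetrization vanishes: (1/6)∑_σ b^i_{σ(j)σ(k)σ(l)} = 0 for all i,j,k,l. -/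
noncomputable section

/-- Symmetrization of a `(0,3)`-family over the six orderings of `(j,k,l)`:
`t_{(jkl)} = (1/6) ∑_σ t_{σ(j)σ(k)σ(l)}`. -/
def sym3 (t : Fin 2 → Fin 2 → Fin 2 → ℝ) (j k l : Fin 2) : ℝ :=
  (1/6) * ∑ σ : Equiv.Perm (Fin 3),
    t (![j, k, l] (σ 0)) (![j, k, l] (σ 1)) (![j, k, l] (σ 2))

/-- The symmetrized Kronecker-delta expression
`δ^i_{(j} b_{kl)} = (1/6) ∑_σ δ^i_{σ(j)} b_{σ(k)σ(l)}`. -/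
def deltaSym (bb : Fin 2 → Fin 2 → ℝ) (i j k l : Fin 2) : ℝ :=
  (1/6) * ∑ σ : Equiv.Perm (Fin 3),
    (if i = ![j, k, l] (σ 0) then (1 : ℝ) else 0) * bb (![j, k, l] (σ 1)) (![j, k, l] (σ 2))

lemma sum_perm3 (f : Equiv.Perm (Fin 3) → ℝ) :
    ∑ σ : Equiv.Perm (Fin 3), f σ =
      f 1 + f (Equiv.swap 0 1) + f (Equiv.swap 0 2) + f (Equiv.swap 1 2) +
      f (Equiv.swap 0 1 * Equiv.swap 1 2) + f (Equiv.swap 1 2 * Equiv.swap 0 1) := by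
  rw [show (Finset.univ : Finset (Equiv.Perm (Fin 3))) =
    {1, Equiv.swap 0 1, Equiv.swap 0 2, Equiv.swap 1 2,
     Equiv.swap 0 1 * Equiv.swap 1 2, Equiv.swap 1 2 * Equiv.swap 0 1} from by decide]
  rw [Finset.sum_insert (by decide), Finset.sum_insert (by decide),
      Finset.sum_insert (by decide), Finset.sum_insert (by decide),
      Finset.sum_insert (by decide), Finset.sum_singleton]
  ring

/-- If the curvature tensor `b^i_{jkl}` of a three-web `W(3,2,2)` satisfies the
transversal geodesicity condition `b^i_{(jkl)} = δ^i_{(j} b_{kl)}` for some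
symmetric family `b_{kl}`, and moreover the entire block `b²_{jkl}` vanishes,
then `b_{kl} = 0` for all `k, l`, and consequently the full symmetrization
`b^i_{(jkl)}` vanishes for all indices.  (Indices: `0 ↦ 1`, `1 ↦ 2`.) -/
theorem vanishing_block_forces_hexagonality
    (b : Fin 2 → Fin 2 → Fin 2 → Fin 2 → ℝ) (bb : Fin 2 → Fin 2 → ℝ)
    (hbb : ∀ k l, bb k l = bb l k)
    (h : ∀ i j k l, sym3 (b i) j k l = deltaSym bb i j k l)
    (hblock : ∀ j k l, b 1 j k l = 0) :
    (∀ k l, bb k l = 0) ∧ (∀ i j k l, sym3 (b i) j k l = 0) := by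
  have key : ∀ j k l, deltaSym bb 1 j k l = 0 := by
    intro j k l
    rw [← h 1 j k l]
    simp [sym3, sum_perm3, hblock]
  have k111 := key 1 1 1
  have k011 := key 0 1 1
  have k001 := key 0 0 1
  have k000 := key 0 0 0
  simp [deltaSym, sum_perm3, Equiv.swap_apply_def] at k111 k011 k001 k000
  have h10 := hbb 1 0
  have hbbz : ∀ k l, bb k l = 0 := by
    intro k l
    fin_cases k <;> fin_cases l <;> show bb _ _ = 0 <;> norm_num <;> linarith
  refine ⟨hbbz, fun i j k l => ?_⟩
  rw [h i j k l]
  simp [deltaSym, hbbz]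

end
end

section
/- Let b^i_{jkl} (i,j,k,l ∈ {1,2}) be a family of real numbers and let b_{kl} be a symmetric family of real numbers such that for all i,j,k,l: (1/6)∑_σ b^i_{σ(j)σ(k)σ(l)} = (1/6)∑_σ δ^i_{σ(j)} b_{σ(k)σ(l)} (sums over all six orderings σ of (j,k,l)). Then b_{kl} is recovered from b by the trace formula b_{kl} = (3/4) ∑_{m=1}^{2} (1/6)∑_σ b^m_{σ(m)σ(k)σ(l)}, where the inner sum runs over all six orderings σ of the triple (m,k,l). -/
noncomputable section

lemma perm3_univ : (Finset.univ : Finset (Equiv.Perm (Fin 3))) =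
    {1, Equiv.swap 0 1, Equiv.swap 0 2, Equiv.swap 1 2, finRotate 3, (finRotate 3)^2} := by
  decide

/-- If the curvature tensor `b^i_{jkl}` of a three-web `W(3,2,2)` satisfies the
transversal geodesicity condition `b^i_{(jkl)} = δ^i_{(j} b_{kl)}` for some
symmetric family `b_{kl}`, then `b_{kl}` is recovered by the trace formula
`b_{kl} = (3/4) ∑_m b^m_{(mkl)}`.  (Indices: `0 ↦ 1`, `1 ↦ 2`.) -/
theorem trace_formula_for_b
    (b : Fin 2 → Fin 2 → Fin 2 → Fin 2 → ℝ) (bb : Fin 2 → Fin 2 → ℝ)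
    (hbb : ∀ k l, bb k l = bb l k)
    (h : ∀ i j k l, sym3 (b i) j k l = deltaSym bb i j k l) :
    ∀ k l, bb k l = (3/4) * ∑ m : Fin 2, sym3 (b m) m k l := by
  intro k l
  rw [Fin.sum_univ_two, h, h]
  unfold deltaSym
  rw [perm3_univ]
  fin_cases k <;> fin_cases l <;>
    simp (config := { decide := true }) [Finset.sum_insert, Finset.sum_pair, Equiv.swap_apply_def, hbb 0 1, (by decide : ((finRotate 3 ^ 2 : Equiv.Perm (Fin 3)) 1) = 0), (by decide : ((finRotate 3 ^ 2 : Equiv.Perm (Fin 3)) 2) = 1)] <;> ring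

end
end

section
/- Fix real constants c_{jk} (j,k ∈ {1,2}) and consider the polynomial three-web given by f¹ = x¹ + y¹, f² = x² + y² + ∑_{j,k} c_{jk} x^j y^k on the domain where Δ₁ := 1 + c₂₁y¹ + c₂₂y² ≠ 0 and Δ₂ := 1 + c₁₂x¹ + c₂₂x² ≠ 0. With α := c₁₁c₂₂ − c₁₂c₂₁ and β := α(x¹ − y¹) + c₁₂ − c₂₁, the torsion covector of this web is a₁ = −β/(Δ₁Δ₂) and a₂ = 0. -/
/-!
In dimension two the torsion covector only sees the off-diagonal part of the connection:
`a₁ = Γ²₁₂ − Γ²₂₁` and `a₂ = Γ¹₂₁ − Γ¹₁₂`. Since `f¹ = x¹ + y¹` has no mixed second derivatives,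
`Γ¹ = 0` and hence `a₂ = 0`. The mixed Hessian of `f²` is the constant matrix `c`, so
`Γ²ⱼₖ = −(ḡᵀ c g̃)ⱼₖ`, and both Jacobians are lower triangular with unit `(1,1)` entry and
determinants `Δ₁`, `Δ₂`, so their inverses are explicit; expanding gives `a₁ = −β/(Δ₁Δ₂)`.
-/

noncomputable section

open Matrix

/-- Partial derivative of `g` with respect to the `j`-th coordinate at the point `x`. -/
def pd (j : Fin 2) (g : (Fin 2 → ℝ) → ℝ) (x : Fin 2 → ℝ) : ℝ :=
  deriv (fun t => g (Function.update x j t)) (x j)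

variable (f : Fin 2 → (Fin 2 → ℝ) → (Fin 2 → ℝ) → ℝ)

/-- Jacobian matrix `f̄ = (∂fⁱ/∂xʲ)` with respect to the first group of variables. -/
def fbar (x y : Fin 2 → ℝ) : Matrix (Fin 2) (Fin 2) ℝ :=
  Matrix.of fun i j => pd j (fun x' => f i x' y) x

/-- Jacobian matrix `f̃ = (∂fⁱ/∂yʲ)` with respect to the second group of variables. -/
def ftil (x y : Fin 2 → ℝ) : Matrix (Fin 2) (Fin 2) ℝ :=
  Matrix.of fun i j => pd j (fun y' => f i x y') y

/-- Mixed second partial derivative `∂²fⁱ/∂xˡ∂yᵐ`. -/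
def d2 (i l m : Fin 2) (x y : Fin 2 → ℝ) : ℝ :=
  pd m (fun y' => pd l (fun x' => f i x' y') x) y

/-- Connection coefficients
`Γⁱⱼₖ = −∑_{l,m} (∂²fⁱ/∂xˡ∂yᵐ) ḡˡⱼ g̃ᵐₖ`, where `ḡ = f̄⁻¹`, `g̃ = f̃⁻¹`. -/
def Gam (i j k : Fin 2) (x y : Fin 2 → ℝ) : ℝ :=
  - ∑ l : Fin 2, ∑ m : Fin 2,
      d2 f i l m x y * (fbar f x y)⁻¹ l j * (ftil f x y)⁻¹ m k

/-- Torsion covector `aⱼ = ∑ₖ (Γᵏⱼₖ − Γᵏₖⱼ)`. -/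
def aCov (j : Fin 2) (x y : Fin 2 → ℝ) : ℝ :=
  ∑ k : Fin 2, (Gam f k j k x y - Gam f k k j x y)

/-- Covariant derivative `p_{ik} = ∑ₘ (∂aᵢ/∂xᵐ) ḡᵐₖ − ∑ⱼ aⱼ Γʲₖᵢ`. -/
def pCov (i k : Fin 2) (x y : Fin 2 → ℝ) : ℝ :=
  (∑ m : Fin 2, pd m (fun x' => aCov f i x' y) x * (fbar f x y)⁻¹ m k)
    - ∑ j : Fin 2, aCov f j x y * Gam f j k i x y

/-- Covariant derivative `q_{ik} = ∑ₘ (∂aᵢ/∂yᵐ) g̃ᵐₖ − ∑ⱼ aⱼ Γʲᵢₖ`. -/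
def qCov (i k : Fin 2) (x y : Fin 2 → ℝ) : ℝ :=
  (∑ m : Fin 2, pd m (fun y' => aCov f i x y') y * (ftil f x y)⁻¹ m k)
    - ∑ j : Fin 2, aCov f j x y * Gam f j i k x y

/-- Isoclinicity invariant `p = (p₁₂ − p₂₁)/2`. -/
def pIso (x y : Fin 2 → ℝ) : ℝ := (pCov f 0 1 x y - pCov f 1 0 x y) / 2

/-- Isoclinicity invariant `q = (q₁₂ − q₂₁)/2`. -/
def qIso (x y : Fin 2 → ℝ) : ℝ := (qCov f 0 1 x y - qCov f 1 0 x y) / 2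


/-- The polynomial web `f¹ = x¹ + y¹`, `f² = x² + y² + ∑_{j,k} c_{jk} x^j y^k`
with fixed real constants `c_{jk}`.
(Indices: `x 0 ↦ x¹`, `x 1 ↦ x²`, `y 0 ↦ y¹`, `y 1 ↦ y²`; `c 0 0 ↦ c₁₁` etc.) -/
noncomputable def webD (c : Fin 2 → Fin 2 → ℝ) :
    Fin 2 → (Fin 2 → ℝ) → (Fin 2 → ℝ) → ℝ :=
  ![fun x y => x 0 + y 0,
    fun x y => x 1 + y 1 + ∑ j : Fin 2, ∑ k : Fin 2, c j k * x j * y k]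


section TwoDimensionalTorsion

variable (f : Fin 2 → (Fin 2 → ℝ) → (Fin 2 → ℝ) → ℝ) (x y : Fin 2 → ℝ)

theorem aCov_zero_eq : aCov f 0 x y = Gam f 1 0 1 x y - Gam f 1 1 0 x y := by
  simp [aCov, Fin.sum_univ_two]

theorem aCov_one_eq : aCov f 1 x y = Gam f 0 1 0 x y - Gam f 0 0 1 x y := by
  simp [aCov, Fin.sum_univ_two]

theorem Gam_eq_zero_of_d2_eq_zero {i : Fin 2} (h : ∀ l m, d2 f i l m x y = 0) (j k : Fin 2) :
    Gam f i j k x y = 0 := by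
  simp [Gam, h]

end TwoDimensionalTorsion

theorem Matrix.inv_of_fin_two_lowerTriangular {K : Type*} [Field K] (s d : K) (hd : d ≠ 0) :
    (!![1, 0; s, d] : Matrix (Fin 2) (Fin 2) K)⁻¹ = !![1, 0; -s / d, d⁻¹] := by
  refine Matrix.inv_eq_right_inv ?_
  ext i j
  fin_cases i <;> fin_cases j <;> simp [Matrix.mul_apply, hd, mul_div_cancel₀]

section webD

variable (c : Fin 2 → Fin 2 → ℝ) (x y : Fin 2 → ℝ)

theorem fbar_webD :
    fbar (webD c) x y = !![1, 0; c 0 0 * y 0 + c 0 1 * y 1, 1 + c 1 0 * y 0 + c 1 1 * y 1] := by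
  ext i j
  fin_cases i <;> fin_cases j <;>
    simp (disch := fun_prop) [fbar, pd, webD, Fin.sum_univ_two, Function.update_apply,
      deriv_fun_add, deriv_fun_mul, add_assoc]

theorem ftil_webD :
    ftil (webD c) x y = !![1, 0; c 0 0 * x 0 + c 1 0 * x 1, 1 + c 0 1 * x 0 + c 1 1 * x 1] := by
  ext i j
  fin_cases i <;> fin_cases j <;>
    simp (disch := fun_prop) [ftil, pd, webD, Fin.sum_univ_two, Function.update_apply,
      deriv_fun_add, deriv_fun_mul, add_assoc]

theorem d2_webD_zero (l m : Fin 2) : d2 (webD c) 0 l m x y = 0 := by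
  fin_cases l <;> fin_cases m <;> simp [d2, pd, webD]

theorem d2_webD_one (l m : Fin 2) : d2 (webD c) 1 l m x y = c l m := by
  fin_cases l <;> fin_cases m <;>
    simp (disch := fun_prop) [d2, pd, webD, Fin.sum_univ_two, Function.update_apply,
      deriv_fun_add, deriv_fun_mul]

end webD

/-- For the polynomial web `webD c` on the domain
`Δ₁ = 1 + c₂₁y¹ + c₂₂y² ≠ 0`, `Δ₂ = 1 + c₁₂x¹ + c₂₂x² ≠ 0`, with
`α = c₁₁c₂₂ − c₁₂c₂₁` and `β = α(x¹ − y¹) + c₁₂ − c₂₁`, the torsion covector is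
`a₁ = −β/(Δ₁Δ₂)` and `a₂ = 0`. -/
theorem webD_torsion_covector (c : Fin 2 → Fin 2 → ℝ) (x y : Fin 2 → ℝ)
    (Δ₁ Δ₂ α β : ℝ)
    (hΔ₁ : Δ₁ = 1 + c 1 0 * y 0 + c 1 1 * y 1)
    (hΔ₂ : Δ₂ = 1 + c 0 1 * x 0 + c 1 1 * x 1)
    (hα : α = c 0 0 * c 1 1 - c 0 1 * c 1 0)
    (hβ : β = α * (x 0 - y 0) + c 0 1 - c 1 0)
    (h1 : Δ₁ ≠ 0) (h2 : Δ₂ ≠ 0) :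
    aCov (webD c) 0 x y = -β / (Δ₁ * Δ₂) ∧
    aCov (webD c) 1 x y = 0 := by
  have hgbar : (fbar (webD c) x y)⁻¹ = !![1, 0; -(c 0 0 * y 0 + c 0 1 * y 1) / Δ₁, Δ₁⁻¹] := by
    rw [fbar_webD, ← hΔ₁, Matrix.inv_of_fin_two_lowerTriangular _ _ h1]
  have hgtil : (ftil (webD c) x y)⁻¹ = !![1, 0; -(c 0 0 * x 0 + c 1 0 * x 1) / Δ₂, Δ₂⁻¹] := by
    rw [ftil_webD, ← hΔ₂, Matrix.inv_of_fin_two_lowerTriangular _ _ h2]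
  constructor
  · rw [aCov_zero_eq]
    simp only [Gam, Fin.sum_univ_two, d2_webD_one, hgbar, hgtil, Matrix.of_apply,
      Matrix.cons_val', Matrix.cons_val_zero, Matrix.cons_val_one, Matrix.empty_val',
      Matrix.cons_val_fin_one]
    rw [hβ, hα]
    field_simp
    rw [hΔ₁, hΔ₂]
    ring
  · simp only [aCov_one_eq, Gam_eq_zero_of_d2_eq_zero _ _ _ (d2_webD_zero c x y), sub_self]

end
end

section
/- For the three-web on the domain {(x¹,x²,y¹,y²) ∈ ℝ⁴ : x¹y² + x²y¹ ≠ 0} given by f¹ = (x¹ + y¹)(x² − y²), f² = (x¹ − y¹)(x² + y²), set Δ := x¹y² + x²y¹ and ρ := x¹x² + y¹y². Then the connection coefficients satisfy Γ¹₁₁ = −Γ²₁₁ = f²/(2Δ²), Γ¹₂₂ = −Γ²₂₂ = −f¹/(2Δ²), Γ¹₁₂ = −Γ¹₂₁ = −Γ²₁₂ = Γ²₂₁ = ρ/(2Δ²), and consequently the two components of the torsion covector are equal: a₁ = a₂ = −ρ/Δ². In particular the transversal a-distribution of this web is the one singled out by the condition a₁ = a₂. -/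
noncomputable section

open Matrix

variable (f : Fin 2 → (Fin 2 → ℝ) → (Fin 2 → ℝ) → ℝ)

/-- The web `f¹ = (x¹ + y¹)(x² − y²)`, `f² = (x¹ − y¹)(x² + y²)`.
(Indices: `x 0 ↦ x¹`, `x 1 ↦ x²`, `y 0 ↦ y¹`, `y 1 ↦ y²`.) -/
noncomputable def webG : Fin 2 → (Fin 2 → ℝ) → (Fin 2 → ℝ) → ℝ :=
  ![fun x y => (x 0 + y 0) * (x 1 - y 1),
    fun x y => (x 0 - y 0) * (x 1 + y 1)]

/-! The first partials of `webG` are affine, so `f̄` and `f̃` are explicit matrices of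
determinant `−2Δ`, inverted by their adjugates, and the mixed second partials are the
constant matrices `±J`, `J = !![0, -1; 1, 0]`. Hence `Γⁱ = −ḡᵀ (±J) g̃` is `(−1)ⁱ` times one
matrix of quadratic forms over `2Δ²`, and the torsion covector is read off from it. -/

lemma pd_eq_of_affine {j : Fin 2} {g : (Fin 2 → ℝ) → ℝ} {x : Fin 2 → ℝ} {c : ℝ}
    (hg : ∀ t, g (Function.update x j t) = c * t + g (Function.update x j 0)) :
    pd j g x = c := by
  unfold pd
  rw [funext hg]
  simp

lemma Gam_eq_neg_transpose_mul (i j k : Fin 2) (x y : Fin 2 → ℝ) :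
    Gam f i j k x y =
      -(((fbar f x y)⁻¹)ᵀ * Matrix.of (fun l m => d2 f i l m x y) * (ftil f x y)⁻¹) j k := by
  simp only [Gam, Matrix.mul_apply, Matrix.transpose_apply, Matrix.of_apply, Finset.sum_mul]
  rw [Finset.sum_comm]
  congr 1
  exact Finset.sum_congr rfl fun l _ => Finset.sum_congr rfl fun m _ => by ring

-- Also true for singular `A`, where both sides are `0`.
theorem Matrix.inv_fin_two {α : Type*} [Field α] (A : Matrix (Fin 2) (Fin 2) α) :
    A⁻¹ = A.det⁻¹ • !![A 1 1, -A 0 1; -A 1 0, A 0 0] := by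
  rw [Matrix.inv_def, Matrix.adjugate_fin_two, Ring.inverse_eq_inv']

def webΔ (x y : Fin 2 → ℝ) : ℝ := x 0 * y 1 + x 1 * y 0

def webρ (x y : Fin 2 → ℝ) : ℝ := x 0 * x 1 + y 0 * y 1

lemma fbar_webG (x y : Fin 2 → ℝ) :
    fbar webG x y = !![x 1 - y 1, x 0 + y 0; x 1 + y 1, x 0 - y 0] := by
  ext i j
  simp only [fbar, Matrix.of_apply]
  fin_cases i <;> fin_cases j <;> refine pd_eq_of_affine fun t => ?_ <;>
    simp [webG, Function.update] <;> ring

lemma ftil_webG (x y : Fin 2 → ℝ) :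
    ftil webG x y = !![x 1 - y 1, -(x 0 + y 0); -(x 1 + y 1), x 0 - y 0] := by
  ext i j
  simp only [ftil, Matrix.of_apply]
  fin_cases i <;> fin_cases j <;> refine pd_eq_of_affine fun t => ?_ <;>
    simp [webG, Function.update] <;> ring

lemma d2_webG (i l m : Fin 2) (x y : Fin 2 → ℝ) :
    d2 webG i l m x y = (-1) ^ (i : ℕ) * !![0, -1; 1, 0] l m := by
  change pd m (fun y' => fbar webG x y' i l) y = _
  simp only [fbar_webG]
  fin_cases i <;> fin_cases l <;> fin_cases m <;>
    refine pd_eq_of_affine fun t => ?_ <;> simp [Function.update] <;> ring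

lemma inv_fbar_webG (x y : Fin 2 → ℝ) :
    (fbar webG x y)⁻¹ =
      (-2 * webΔ x y)⁻¹ • !![x 0 - y 0, -(x 0 + y 0); -(x 1 + y 1), x 1 - y 1] := by
  rw [Matrix.inv_fin_two, fbar_webG, Matrix.det_fin_two_of, webΔ]
  congr 1
  ring

lemma inv_ftil_webG (x y : Fin 2 → ℝ) :
    (ftil webG x y)⁻¹ =
      (-2 * webΔ x y)⁻¹ • !![x 0 - y 0, x 0 + y 0; x 1 + y 1, x 1 - y 1] := by
  rw [Matrix.inv_fin_two, ftil_webG, Matrix.det_fin_two_of, webΔ]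
  congr 1
  · ring
  · simp

lemma Gam_webG (i j k : Fin 2) (x y : Fin 2 → ℝ) :
    Gam webG i j k x y = (-1) ^ (i : ℕ) *
      !![webG 1 x y, webρ x y; -webρ x y, -webG 0 x y] j k / (2 * webΔ x y ^ 2) := by
  have hd2 : Matrix.of (fun l m => d2 webG i l m x y) = (-1) ^ (i : ℕ) • !![0, -1; 1, 0] := by
    ext l m
    simp [d2_webG]
  rw [Gam_eq_neg_transpose_mul, hd2, inv_fbar_webG, inv_ftil_webG]
  fin_cases j <;> fin_cases k <;> simp [Matrix.mul_apply, webG, webρ] <;> ring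

lemma aCov_webG (j : Fin 2) (x y : Fin 2 → ℝ) : aCov webG j x y = -webρ x y / webΔ x y ^ 2 := by
  fin_cases j <;> simp [aCov, Fin.sum_univ_two, Gam_webG] <;> ring

theorem webG_connection_and_torsion_general (x y : Fin 2 → ℝ)
    (Δ ρ : ℝ) (hΔ : Δ = x 0 * y 1 + x 1 * y 0) (hρ : ρ = x 0 * x 1 + y 0 * y 1) :
    Gam webG 0 0 0 x y = (x 0 - y 0) * (x 1 + y 1) / (2 * Δ^2) ∧
    Gam webG 1 0 0 x y = -((x 0 - y 0) * (x 1 + y 1) / (2 * Δ^2)) ∧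
    Gam webG 0 1 1 x y = -((x 0 + y 0) * (x 1 - y 1) / (2 * Δ^2)) ∧
    Gam webG 1 1 1 x y = (x 0 + y 0) * (x 1 - y 1) / (2 * Δ^2) ∧
    Gam webG 0 0 1 x y = ρ / (2 * Δ^2) ∧
    Gam webG 0 1 0 x y = -(ρ / (2 * Δ^2)) ∧
    Gam webG 1 0 1 x y = -(ρ / (2 * Δ^2)) ∧
    Gam webG 1 1 0 x y = ρ / (2 * Δ^2) ∧
    aCov webG 0 x y = -ρ / Δ^2 ∧
    aCov webG 1 x y = -ρ / Δ^2 := by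
  obtain rfl : Δ = webΔ x y := hΔ
  obtain rfl : ρ = webρ x y := hρ
  refine ⟨?_, ?_, ?_, ?_, ?_, ?_, ?_, ?_, aCov_webG 0 x y, aCov_webG 1 x y⟩ <;>
    rw [Gam_webG] <;> simp [webG, neg_div]

/-- For the web `webG` on the domain `Δ = x¹y² + x²y¹ ≠ 0`, with
`ρ = x¹x² + y¹y²`, the connection coefficients satisfy
`Γ¹₁₁ = −Γ²₁₁ = f²/(2Δ²)`, `Γ¹₂₂ = −Γ²₂₂ = −f¹/(2Δ²)`,
`Γ¹₁₂ = −Γ¹₂₁ = −Γ²₁₂ = Γ²₂₁ = ρ/(2Δ²)`, and consequently the two components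
of the torsion covector are equal: `a₁ = a₂ = −ρ/Δ²`. -/
theorem webG_connection_and_torsion (x y : Fin 2 → ℝ)
    (Δ ρ : ℝ) (hΔ : Δ = x 0 * y 1 + x 1 * y 0) (hρ : ρ = x 0 * x 1 + y 0 * y 1)
    (h : Δ ≠ 0) :
    Gam webG 0 0 0 x y = (x 0 - y 0) * (x 1 + y 1) / (2 * Δ^2) ∧
    Gam webG 1 0 0 x y = -((x 0 - y 0) * (x 1 + y 1) / (2 * Δ^2)) ∧
    Gam webG 0 1 1 x y = -((x 0 + y 0) * (x 1 - y 1) / (2 * Δ^2)) ∧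
    Gam webG 1 1 1 x y = (x 0 + y 0) * (x 1 - y 1) / (2 * Δ^2) ∧
    Gam webG 0 0 1 x y = ρ / (2 * Δ^2) ∧
    Gam webG 0 1 0 x y = -(ρ / (2 * Δ^2)) ∧
    Gam webG 1 0 1 x y = -(ρ / (2 * Δ^2)) ∧
    Gam webG 1 1 0 x y = ρ / (2 * Δ^2) ∧
    aCov webG 0 x y = -ρ / Δ^2 ∧
    aCov webG 1 x y = -ρ / Δ^2 :=
  webG_connection_and_torsion_general x y Δ ρ hΔ hρ

end
end
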